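/- Let H and H̃ be Hermitian positive definite n×n matrices such that |x*(H - H̃)y| ≤ F √(x*Hx · y*Hy) for all x, y and some constant 0 ≤ F < 1. Then for all x, y, |x*(H̃^{-1} - H^{-1})y| ≤ (F/(1-F)) √(x*H^{-1}x · y*H^{-1}y). -/

import Mathlib

/-!
Factor `H = Rᴴ R` and put `S = R⁻¹`, so that `Sᴴ H S = 1` and `S Sᴴ = H⁻¹`. In the coordinates
`x = S u` the hypothesis says that `M = Sᴴ H̃ S` satisfies `‖1 - M‖ ≤ F` in the spectral norm.
Since `M⁻¹ - 1 = (1 - M) M⁻¹` and `‖M⁻¹‖ ≤ 1 + ‖M⁻¹ - 1‖`, this gives `‖M⁻¹ - 1‖ ≤ F / (1 - F)`,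
and `H̃⁻¹ - H⁻¹ = S (M⁻¹ - 1) Sᴴ` transfers the bound back.
-/

open Matrix
open scoped ComplexOrder

noncomputable def specNorm {n : Type*} [Fintype n] [DecidableEq n] (A : Matrix n n ℂ) : ℝ :=
  ‖Matrix.toEuclideanCLM (𝕜 := ℂ) A‖

noncomputable def frobNorm {m k : Type*} [Fintype m] [Fintype k] (A : Matrix m k ℂ) : ℝ :=
  Real.sqrt (∑ i, ∑ j, ‖A i j‖ ^ 2)

noncomputable def psqrt {n : Type*} [Fintype n] [DecidableEq n] {A : Matrix n n ℂ}
    (hA : A.PosDef) : Matrix n n ℂ :=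
  hA.posSemidef.1.eigenvectorUnitary.1 * diagonal ((↑) ∘ (√·) ∘ hA.posSemidef.1.eigenvalues) *
    (star hA.posSemidef.1.eigenvectorUnitary : Matrix n n ℂ)

open scoped InnerProductSpace MatrixOrder

theorem ContinuousLinearMap.norm_sub_one_le_of_mul_eq_one {𝕜 E : Type*} [NontriviallyNormedField 𝕜]
    [NormedAddCommGroup E] [NormedSpace 𝕜 E] {T T' : E →L[𝕜] E} (hTT' : T * T' = 1) {F : ℝ}
    (hT : ‖1 - T‖ ≤ F) (hF : F < 1) : ‖T' - 1‖ ≤ F / (1 - F) := by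
  have hsub : ‖T' - 1‖ ≤ F * ‖T'‖ := by
    calc ‖T' - 1‖ = ‖(1 - T) * T'‖ := by rw [sub_mul, one_mul, hTT']
      _ ≤ ‖1 - T‖ * ‖T'‖ := norm_mul_le _ _
      _ ≤ F * ‖T'‖ := by gcongr
  have hT' : ‖T'‖ ≤ 1 + ‖T' - 1‖ := by
    calc ‖T'‖ = ‖1 + (T' - 1)‖ := by rw [add_sub_cancel]
      _ ≤ ‖(1 : E →L[𝕜] E)‖ + ‖T' - 1‖ := norm_add_le _ _
      _ ≤ 1 + ‖T' - 1‖ := by gcongr; exact norm_id_le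
  have hF0 : 0 ≤ F := (norm_nonneg _).trans hT
  rw [le_div_iff₀ (by linarith)]
  nlinarith

namespace Matrix

variable {𝕜 n m : Type*} [RCLike 𝕜] [Fintype n] [Fintype m]

def RelFormBound (H D : Matrix n n 𝕜) (F : ℝ) : Prop :=
  ∀ x y : n → 𝕜, ‖star x ⬝ᵥ (D *ᵥ y)‖ ≤
    F * √(RCLike.re (star x ⬝ᵥ (H *ᵥ x)) * RCLike.re (star y ⬝ᵥ (H *ᵥ y)))

theorem star_dotProduct_conjTranspose_mul_mul_mulVec (S : Matrix n m 𝕜) (D : Matrix n n 𝕜)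
    (x y : m → 𝕜) : star x ⬝ᵥ ((Sᴴ * D * S) *ᵥ y) = star (S *ᵥ x) ⬝ᵥ (D *ᵥ (S *ᵥ y)) := by
  rw [star_mulVec, ← mulVec_mulVec, ← mulVec_mulVec, dotProduct_mulVec]

theorem RelFormBound.conj {H D : Matrix n n 𝕜} {F : ℝ} (h : RelFormBound H D F)
    (S : Matrix n m 𝕜) : RelFormBound (Sᴴ * H * S) (Sᴴ * D * S) F := fun x y => by
  simpa only [star_dotProduct_conjTranspose_mul_mul_mulVec] using h (S *ᵥ x) (S *ᵥ y)

theorem star_dotProduct_toEuclideanCLM [DecidableEq n] (D : Matrix n n 𝕜) (x y : n → 𝕜) :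
    ⟪WithLp.toLp 2 x, toEuclideanCLM (𝕜 := 𝕜) D (WithLp.toLp 2 y)⟫_𝕜 = star x ⬝ᵥ (D *ᵥ y) := by
  rw [toEuclideanCLM_toLp, EuclideanSpace.inner_toLp_toLp, dotProduct_comm]

theorem sqrt_re_star_dotProduct_mul (x y : n → 𝕜) :
    √(RCLike.re (star x ⬝ᵥ x) * RCLike.re (star y ⬝ᵥ y)) =
      ‖WithLp.toLp 2 x‖ * ‖WithLp.toLp 2 y‖ := by
  have hsq (v : n → 𝕜) : RCLike.re (star v ⬝ᵥ v) = ‖WithLp.toLp 2 v‖ ^ 2 := by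
    rw [← inner_self_eq_norm_sq (𝕜 := 𝕜), EuclideanSpace.inner_toLp_toLp, dotProduct_comm]
  rw [hsq, hsq, ← mul_pow, Real.sqrt_sq (by positivity)]

theorem relFormBound_one_iff [DecidableEq n] {D : Matrix n n 𝕜} {F : ℝ} (hF : 0 ≤ F) :
    RelFormBound 1 D F ↔ ‖toEuclideanCLM (𝕜 := 𝕜) D‖ ≤ F := by
  simp only [RelFormBound, one_mulVec, sqrt_re_star_dotProduct_mul,
    ← star_dotProduct_toEuclideanCLM]
  constructor
  · intro h
    refine ContinuousLinearMap.opNorm_le_of_re_inner_le hF fun u v hu hv => ?_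
    calc RCLike.re ⟪toEuclideanCLM (𝕜 := 𝕜) D u, v⟫_𝕜
        ≤ ‖⟪v, toEuclideanCLM (𝕜 := 𝕜) D u⟫_𝕜‖ := by
          rw [← inner_conj_symm, RCLike.conj_re]; exact RCLike.re_le_norm _
      _ ≤ F := by simpa [hu, hv] using h v.ofLp u.ofLp
  · intro h x y
    calc _ ≤ ‖WithLp.toLp 2 x‖ * ‖toEuclideanCLM (𝕜 := 𝕜) D (WithLp.toLp 2 y)‖ :=
          norm_inner_le_norm _ _
      _ ≤ ‖WithLp.toLp 2 x‖ * (F * ‖WithLp.toLp 2 y‖) := by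
          gcongr; exact (ContinuousLinearMap.le_opNorm _ _).trans (by gcongr)
      _ = _ := by ring

theorem PosDef.exists_conjTranspose_mul_mul_eq_one [DecidableEq n] {H : Matrix n n 𝕜}
    (hH : H.PosDef) : ∃ S : Matrix n n 𝕜, IsUnit S ∧ Sᴴ * H * S = 1 ∧ S * Sᴴ = H⁻¹ := by
  obtain ⟨R, rfl⟩ := CStarAlgebra.nonneg_iff_eq_star_mul_self.mp hH.posSemidef.nonneg
  have hR : IsUnit R := isUnit_of_mul_isUnit_right hH.isUnit
  refine ⟨R⁻¹, isUnit_nonsing_inv_iff.2 hR, ?_, ?_⟩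
  · rw [star_eq_conjTranspose, conjTranspose_nonsing_inv, ← mul_assoc,
      nonsing_inv_mul _ ((isUnit_iff_isUnit_det Rᴴ).1 hR.star), one_mul,
      mul_nonsing_inv _ ((isUnit_iff_isUnit_det _).1 hR)]
  · rw [star_eq_conjTranspose, Matrix.mul_inv_rev, conjTranspose_nonsing_inv]

theorem mul_inv_conjTranspose_mul_mul_mul [DecidableEq n] {S : Matrix n n 𝕜} (hS : IsUnit S)
    (A : Matrix n n 𝕜) : S * (Sᴴ * A * S)⁻¹ * Sᴴ = A⁻¹ := by
  rw [Matrix.mul_inv_rev, Matrix.mul_inv_rev,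
    mul_nonsing_inv_cancel_left _ _ ((isUnit_iff_isUnit_det _).1 hS),
    nonsing_inv_mul_cancel_right _ _ ((isUnit_iff_isUnit_det Sᴴ).1 hS.star)]

end Matrix

theorem stmt_3 {n : ℕ} (H Ht : Matrix (Fin n) (Fin n) ℂ)
    (hH : H.PosDef) (hHt : Ht.PosDef) (F : ℝ) (hF0 : 0 ≤ F) (hF1 : F < 1)
    (hbound : ∀ x y : Fin n → ℂ,
      ‖star x ⬝ᵥ ((H - Ht) *ᵥ y)‖ ≤
        F * Real.sqrt ((star x ⬝ᵥ (H *ᵥ x)).re * (star y ⬝ᵥ (H *ᵥ y)).re)) :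
    ∀ x y : Fin n → ℂ,
      ‖star x ⬝ᵥ ((Ht⁻¹ - H⁻¹) *ᵥ y)‖ ≤
        (F / (1 - F)) *
          Real.sqrt ((star x ⬝ᵥ (H⁻¹ *ᵥ x)).re * (star y ⬝ᵥ (H⁻¹ *ᵥ y)).re) := by
  obtain ⟨S, hS, hSHS, hSS⟩ := hH.exists_conjTranspose_mul_mul_eq_one
  set M := Sᴴ * Ht * S
  set T := toEuclideanCLM (n := Fin n) (𝕜 := ℂ)
  have hM : IsUnit M := (hS.star.mul hHt.isUnit).mul hS
  have hMinv : T M * T M⁻¹ = 1 := by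
    rw [← map_mul, mul_nonsing_inv _ ((isUnit_iff_isUnit_det _).1 hM), map_one]
  have hboundM : RelFormBound 1 (1 - M) F := by
    simpa only [mul_sub, sub_mul, hSHS] using RelFormBound.conj hbound S
  have hnorm : ‖T (M⁻¹ - 1)‖ ≤ F / (1 - F) := by
    rw [map_sub, map_one]
    refine ContinuousLinearMap.norm_sub_one_le_of_mul_eq_one hMinv ?_ hF1
    simpa only [map_sub, map_one] using (relFormBound_one_iff hF0).1 hboundM
  have hconcl := ((relFormBound_one_iff (div_nonneg hF0 (sub_nonneg.2 hF1.le))).2 hnorm).conj Sᴴ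
  rw [conjTranspose_conjTranspose, mul_one, mul_sub, sub_mul, mul_one, hSS,
    mul_inv_conjTranspose_mul_mul_mul hS] at hconcl
  exact hconcl
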